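/- Let {X_i}_{i≥1} be a sequence of independent, identically distributed random vectors in ℝ^d with common distribution P, let P_n denote the empirical probability measure of X_1, …, X_n, let α ∈ (0, 1] and let Q ∈ P^α. Then almost surely there exists a sequence of probability measures {Q_n}_n with Q_n ∈ P_n^α for all sufficiently large n such that Q_n converges weakly to Q; that is, Q belongs to the Painlevé–Kuratowski lower limit liminf_n P_n^α almost surely. -/

import Mathlib

/-!
`Q` has a density `f = dQ/dP` with `0 ≤ f ≤ α⁻¹`. Reweighting the sample by `f / Mₙ`, where
`Mₙ = max 1 (∫ f dPₙ)`, keeps every weight below `α⁻¹` and gives total mass `1 - cₙ ≤ 1`; the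
missing mass `cₙ` is restored by an affine map of the weights that fixes `α⁻¹`, so the result `Qₙ`
is a probability measure in `Pₙ^α`. By the strong law of large numbers, almost surely `Mₙ → 1` and
`∫_U f dPₙ → Q U` simultaneously for the countably many finite unions `U` of a countable basis.
Since `Qₙ U ≥ (∫_U f dPₙ) / Mₙ`, this gives `Q U ≤ liminf Qₙ U`, which is enough for weak
convergence by the portmanteau theorem: every open set is a directed countable union of such `U`.
-/

open MeasureTheory ProbabilityTheory Filter Topology TopologicalSpace
open scoped ENNReal

def trimSet {d : ℕ} (P : ProbabilityMeasure (Fin d → ℝ)) (α : ℝ) :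
    Set (ProbabilityMeasure (Fin d → ℝ)) :=
  {Q | ∀ B : Set (Fin d → ℝ), MeasurableSet B →
    (Q : Measure (Fin d → ℝ)) B ≤ ENNReal.ofReal α⁻¹ * (P : Measure (Fin d → ℝ)) B}

/-- The affine map fixing `a` and sending `1 - c` to `1`. For `0 ≤ c` and `1 ≤ a` the denominator
vanishes only when `c = 0`, where the junk value `x / 0 = 0` makes it the identity, as it should. -/
noncomputable def topUp (a c y : ℝ) : ℝ := y + c * (a - y) / (a - 1 + c)

section TopUp

variable {a c y : ℝ}

lemma le_topUp (hc : 0 ≤ c) (ha : 1 ≤ a) (hy : y ≤ a) : y ≤ topUp a c y := by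
  have : 0 ≤ c * (a - y) / (a - 1 + c) :=
    div_nonneg (mul_nonneg hc (sub_nonneg.2 hy)) (by linarith)
  unfold topUp
  linarith

lemma topUp_le (hc : 0 ≤ c) (ha : 1 ≤ a) (hy : y ≤ a) : topUp a c y ≤ a := by
  have : c * (a - y) / (a - 1 + c) ≤ a - y := by
    rw [mul_comm, mul_div_assoc]
    exact mul_le_of_le_one_right (sub_nonneg.2 hy) (div_le_one_of_le₀ (by linarith) (by linarith))
  unfold topUp
  linarith

lemma topUp_one_sub (hc : 0 ≤ c) (ha : 1 ≤ a) : topUp a c (1 - c) = 1 := by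
  unfold topUp
  by_cases hD : a - 1 + c = 0
  · obtain rfl : c = 0 := by linarith
    simp
  · rw [show a - (1 - c) = a - 1 + c by ring, mul_div_assoc, div_self hD]
    ring

lemma integral_topUp {E : Type*} [MeasurableSpace E] {ν : Measure E} [IsProbabilityMeasure ν]
    {w : E → ℝ} (hw : Integrable w ν) :
    ∫ y, topUp a c (w y) ∂ν = topUp a c (∫ y, w y ∂ν) := by
  have h_affine : ∀ y, topUp a c y = (1 - c / (a - 1 + c)) * y + c * a / (a - 1 + c) := by
    intro y; unfold topUp; ring
  simp only [h_affine]
  rw [integral_add (hw.const_mul _) (integrable_const _), integral_const_mul, integral_const]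
  simp

end TopUp

section Reweight

variable {E : Type*} [MeasurableSpace E] {ν : Measure E} {f : E → ℝ} {a : ℝ}

lemma integrable_of_nonneg_of_le [IsFiniteMeasure ν] (hf : Measurable f) (hf0 : ∀ y, 0 ≤ f y)
    (hfa : ∀ y, f y ≤ a) : Integrable f ν :=
  .of_bound hf.aestronglyMeasurable a
    (ae_of_all _ fun y => by rw [Real.norm_of_nonneg (hf0 y)]; exact hfa y)

noncomputable def reweightDensity (ν : Measure E) (f : E → ℝ) (a : ℝ) (y : E) : ℝ :=
  topUp a (1 - (∫ z, f z ∂ν) / max 1 (∫ z, f z ∂ν)) (f y / max 1 (∫ z, f z ∂ν))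

noncomputable def reweight (ν : Measure E) (f : E → ℝ) (a : ℝ) : Measure E :=
  ν.withDensity fun y => ENNReal.ofReal (reweightDensity ν f a y)

lemma one_sub_integral_div_max_nonneg : 0 ≤ 1 - (∫ z, f z ∂ν) / max 1 (∫ z, f z ∂ν) :=
  sub_nonneg.2 (div_le_one_of_le₀ (le_max_right _ _) (zero_le_one.trans (le_max_left _ _)))

lemma div_max_integral_le (hf0 : ∀ y, 0 ≤ f y) (hfa : ∀ y, f y ≤ a) (y : E) :
    f y / max 1 (∫ z, f z ∂ν) ≤ a :=
  (div_le_self (hf0 y) (le_max_left _ _)).trans (hfa y)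

lemma div_max_integral_le_reweightDensity (hf0 : ∀ y, 0 ≤ f y) (hfa : ∀ y, f y ≤ a) (ha : 1 ≤ a)
    (y : E) :
    f y / max 1 (∫ z, f z ∂ν) ≤ reweightDensity ν f a y :=
  le_topUp one_sub_integral_div_max_nonneg ha (div_max_integral_le hf0 hfa y)

lemma reweightDensity_le (hf0 : ∀ y, 0 ≤ f y) (hfa : ∀ y, f y ≤ a) (ha : 1 ≤ a) (y : E) :
    reweightDensity ν f a y ≤ a :=
  topUp_le one_sub_integral_div_max_nonneg ha (div_max_integral_le hf0 hfa y)

lemma reweightDensity_nonneg (hf0 : ∀ y, 0 ≤ f y) (hfa : ∀ y, f y ≤ a) (ha : 1 ≤ a) (y : E) :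
    0 ≤ reweightDensity ν f a y :=
  (div_nonneg (hf0 y) (zero_le_one.trans (le_max_left _ _))).trans
    (div_max_integral_le_reweightDensity hf0 hfa ha y)

lemma integral_reweightDensity [IsProbabilityMeasure ν] (hf : Measurable f)
    (hf0 : ∀ y, 0 ≤ f y) (hfa : ∀ y, f y ≤ a) (ha : 1 ≤ a) :
    ∫ y, reweightDensity ν f a y ∂ν = 1 := by
  have hint : Integrable f ν := integrable_of_nonneg_of_le hf hf0 hfa
  unfold reweightDensity
  rw [integral_topUp (hint.div_const _), integral_div]
  simpa only [sub_sub_cancel] using topUp_one_sub (one_sub_integral_div_max_nonneg (ν := ν)) ha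

lemma reweight_le_smul (hf0 : ∀ y, 0 ≤ f y) (hfa : ∀ y, f y ≤ a) (ha : 1 ≤ a) :
    reweight ν f a ≤ ENNReal.ofReal a • ν := by
  rw [← withDensity_const]
  exact withDensity_mono (ae_of_all _ fun y =>
    ENNReal.ofReal_le_ofReal (reweightDensity_le hf0 hfa ha y))

lemma isProbabilityMeasure_reweight [IsProbabilityMeasure ν] (hf : Measurable f)
    (hf0 : ∀ y, 0 ≤ f y) (hfa : ∀ y, f y ≤ a) (ha : 1 ≤ a) :
    IsProbabilityMeasure (reweight ν f a) := by
  have hmeas : Measurable (reweightDensity ν f a) := by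
    unfold reweightDensity topUp; fun_prop
  constructor
  rw [reweight, withDensity_apply _ MeasurableSet.univ, Measure.restrict_univ,
    ← ofReal_integral_eq_lintegral_ofReal
      (integrable_of_nonneg_of_le hmeas (reweightDensity_nonneg hf0 hfa ha)
        (reweightDensity_le hf0 hfa ha))
      (ae_of_all _ (reweightDensity_nonneg hf0 hfa ha)),
    integral_reweightDensity hf hf0 hfa ha, ENNReal.ofReal_one]

lemma ofReal_setIntegral_div_le_reweight [IsFiniteMeasure ν] (hf : Measurable f)
    (hf0 : ∀ y, 0 ≤ f y) (hfa : ∀ y, f y ≤ a) (ha : 1 ≤ a) {B : Set E} (hB : MeasurableSet B) :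
    ENNReal.ofReal ((∫ y in B, f y ∂ν) / max 1 (∫ y, f y ∂ν)) ≤ reweight ν f a B := by
  rw [← integral_div, ofReal_integral_eq_lintegral_ofReal
      ((integrable_of_nonneg_of_le hf hf0 hfa).integrableOn.div_const _)
      (ae_of_all _ fun y => div_nonneg (hf0 y) (zero_le_one.trans (le_max_left _ _))),
    reweight, withDensity_apply _ hB]
  exact lintegral_mono fun y =>
    ENNReal.ofReal_le_ofReal (div_max_integral_le_reweightDensity hf0 hfa ha y)

end Reweight

lemma le_liminf_reweight {E : Type*} [MeasurableSpace E] {ν : ℕ → Measure E}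
    [∀ n, IsFiniteMeasure (ν n)] {f : E → ℝ} {a : ℝ} (hf : Measurable f)
    (hf0 : ∀ y, 0 ≤ f y) (hfa : ∀ y, f y ≤ a) (ha : 1 ≤ a) {B : Set E} (hB : MeasurableSet B)
    {q : ℝ≥0∞} (hq : q ≠ ∞) (h_total : Tendsto (fun n => ∫ y, f y ∂ν n) atTop (𝓝 1))
    (h_on : Tendsto (fun n => ∫ y in B, f y ∂ν n) atTop (𝓝 q.toReal)) :
    q ≤ liminf (fun n => reweight (ν n) f a B) atTop := by
  have h_lower : Tendsto (fun n => ENNReal.ofReal ((∫ y in B, f y ∂ν n) / max 1 (∫ y, f y ∂ν n)))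
      atTop (𝓝 q) := by
    have := ENNReal.tendsto_ofReal
      (h_on.div ((tendsto_const_nhds (x := (1 : ℝ))).max h_total) (by norm_num))
    rwa [max_self, div_one, ENNReal.ofReal_toReal hq] at this
  rw [← h_lower.liminf_eq]
  exact liminf_le_liminf (Eventually.of_forall fun n =>
    ofReal_setIntegral_div_le_reweight hf hf0 hfa ha hB)

lemma exists_bounded_density_of_le_mul {E : Type*} [MeasurableSpace E] {P Q : Measure E}
    [SigmaFinite P] [IsFiniteMeasure Q] {c : ℝ} (hc : 0 ≤ c)
    (hQ : ∀ B, MeasurableSet B → Q B ≤ ENNReal.ofReal c * P B) :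
    ∃ f : E → ℝ, Measurable f ∧ (∀ y, 0 ≤ f y) ∧ (∀ y, f y ≤ c) ∧
      ∀ B, MeasurableSet B → ∫ y in B, f y ∂P = (Q B).toReal := by
  have hac : Q ≪ P := Measure.AbsolutelyContinuous.mk fun B hB hPB =>
    le_antisymm ((hQ B hB).trans_eq (by rw [hPB, mul_zero])) bot_le
  have h_le : Q.rnDeriv P ≤ᵐ[P] fun _ => ENNReal.ofReal c :=
    ae_le_of_forall_setLIntegral_le_of_sigmaFinite (Measure.measurable_rnDeriv _ _)
      fun B hB _ => by rw [Measure.setLIntegral_rnDeriv hac, setLIntegral_const]; exact hQ B hB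
  set f : E → ℝ := fun y => min (Q.rnDeriv P y).toReal c
  have hf : Measurable f := (Measure.measurable_rnDeriv _ _).ennreal_toReal.min measurable_const
  have hf0 : ∀ y, 0 ≤ f y := fun y => le_min ENNReal.toReal_nonneg hc
  have hf_ae : (fun y => ENNReal.ofReal (f y)) =ᵐ[P] Q.rnDeriv P := by
    filter_upwards [h_le, Measure.rnDeriv_lt_top Q P] with y h_le h_top
    dsimp only [f]
    rw [min_eq_left (ENNReal.toReal_le_of_le_ofReal hc h_le), ENNReal.ofReal_toReal h_top.ne]
  refine ⟨f, hf, hf0, fun y => min_le_right _ _, fun B hB => ?_⟩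
  rw [integral_eq_lintegral_of_nonneg_ae (ae_of_all _ hf0) hf.aestronglyMeasurable,
    lintegral_congr_ae (ae_restrict_of_ae hf_ae), Measure.setLIntegral_rnDeriv hac]

section Empirical

variable {E : Type*} [MeasurableSpace E]

noncomputable def empiricalMeasure (x : ℕ → E) (n : ℕ) : Measure E :=
  (n : ℝ≥0∞)⁻¹ • ∑ i ∈ Finset.range n, Measure.dirac (x i)

lemma empiricalMeasure_apply (x : ℕ → E) (n : ℕ) {B : Set E} (hB : MeasurableSet B) :
    empiricalMeasure x n B =
      ENNReal.ofReal ((∑ i ∈ Finset.range n, B.indicator (fun _ => (1 : ℝ)) (x i)) / n) := by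
  simp only [empiricalMeasure, Measure.smul_apply, Measure.coe_finsetSum, Finset.sum_apply,
    Measure.dirac_apply' _ hB, smul_eq_mul]
  rcases Nat.eq_zero_or_pos n with rfl | hn
  · simp
  rw [ENNReal.ofReal_div_of_pos (by positivity), ENNReal.ofReal_natCast,
    ENNReal.ofReal_sum_of_nonneg fun i _ => Set.indicator_nonneg (fun _ _ => zero_le_one) _,
    ENNReal.div_eq_inv_mul]
  congr 1
  refine Finset.sum_congr rfl fun i _ => ?_
  by_cases hi : x i ∈ B <;> simp [hi]

lemma eq_empiricalMeasure_of_toReal_apply {ν : Measure E} [IsFiniteMeasure ν] {x : ℕ → E} {n : ℕ}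
    (h : ∀ B, MeasurableSet B →
      (ν B).toReal = (∑ i ∈ Finset.range n, B.indicator (fun _ => (1 : ℝ)) (x i)) / n) :
    ν = empiricalMeasure x n :=
  Measure.ext fun B hB => by
    rw [empiricalMeasure_apply x n hB, ← h B hB, ENNReal.ofReal_toReal (measure_ne_top _ _)]

lemma integral_empiricalMeasure [MeasurableSingletonClass E] (x : ℕ → E) (n : ℕ) (h : E → ℝ) :
    ∫ y, h y ∂empiricalMeasure x n = (∑ i ∈ Finset.range n, h (x i)) / n := by
  rw [empiricalMeasure, integral_smul_measure, integral_finsetSum_measure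
    fun i _ => integrable_dirac enorm_lt_top]
  simp [integral_dirac, ENNReal.toReal_inv, div_eq_inv_mul]

lemma ae_tendsto_integral_empiricalMeasure [MeasurableSingletonClass E] {Ω : Type*}
    [MeasurableSpace Ω] {μ : Measure Ω} {P : Measure E} {X : ℕ → Ω → E}
    (hmeas : ∀ i, Measurable (X i)) (hindep : iIndepFun X μ) (hdist : ∀ i, μ.map (X i) = P)
    {h : E → ℝ} (hh : Measurable h) (hint : Integrable h P) :
    ∀ᵐ ω ∂μ, Tendsto (fun n => ∫ y, h y ∂empiricalMeasure (X · ω) n) atTop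
      (𝓝 (∫ y, h y ∂P)) := by
  have hident : ∀ i, IdentDistrib (h ∘ X i) (h ∘ X 0) μ μ := fun i =>
    IdentDistrib.comp ⟨(hmeas i).aemeasurable, (hmeas 0).aemeasurable, by rw [hdist, hdist]⟩ hh
  have := strong_law_ae_real (fun i => h ∘ X i) ((hdist 0 ▸ hint).comp_measurable (hmeas 0))
    (fun i j hij => (hindep.indepFun hij).comp hh hh) hident
  rw [← hdist 0, integral_map (hmeas 0).aemeasurable hh.aestronglyMeasurable]
  simpa only [integral_empiricalMeasure, Function.comp_apply] using this

end Empirical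

lemma MeasureTheory.ProbabilityMeasure.tendsto_of_forall_biUnion_le_liminf {E : Type*}
    [MeasurableSpace E] [TopologicalSpace E] [OpensMeasurableSpace E] {𝓑 : Set (Set E)}
    (h𝓑 : IsTopologicalBasis 𝓑) (h𝓑c : 𝓑.Countable)
    {μ : ProbabilityMeasure E} {μs : ℕ → ProbabilityMeasure E}
    (h : ∀ t : Finset 𝓑, (μ : Measure E) (⋃ s ∈ t, (s : Set E)) ≤
      liminf (fun n => (μs n : Measure E) (⋃ s ∈ t, (s : Set E))) atTop) :
    Tendsto μs atTop (𝓝 μ) := by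
  have : Countable 𝓑 := h𝓑c.to_subtype
  refine tendsto_of_forall_isOpen_le_liminf' fun G hG => ?_
  let T : Set (Finset 𝓑) := {t | ∀ s ∈ t, (s : Set E) ⊆ G}
  have hGT : G = ⋃ t ∈ T, ⋃ s ∈ t, (s : Set E) := by
    refine subset_antisymm (fun y hy => ?_) (Set.iUnion₂_subset fun t ht => Set.iUnion₂_subset ht)
    obtain ⟨s, hs, hys, hsG⟩ := h𝓑.exists_subset_of_mem_open hy hG
    exact Set.mem_biUnion (x := {⟨s, hs⟩})
      (fun s' hs' => by rw [Finset.mem_singleton.1 hs']; exact hsG) (by simpa using hys)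
  have hT : DirectedOn (Function.onFun (· ⊆ ·) fun t : Finset 𝓑 => ⋃ s ∈ t, (s : Set E)) T :=
    fun t₁ h₁ t₂ h₂ => ⟨t₁ ∪ t₂, fun s hs => (Finset.mem_union.1 hs).elim (h₁ s) (h₂ s),
      Set.biUnion_subset_biUnion_left Finset.subset_union_left,
      Set.biUnion_subset_biUnion_left Finset.subset_union_right⟩
  calc (μ : Measure E) G = ⨆ t ∈ T, (μ : Measure E) (⋃ s ∈ t, (s : Set E)) := by
        conv_lhs => rw [hGT]
        exact measure_biUnion_eq_iSup T.to_countable hT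
    _ ≤ liminf (fun n => (μs n : Measure E) G) atTop :=
        iSup₂_le fun t ht => (h t).trans (liminf_le_liminf (Eventually.of_forall fun n =>
          measure_mono (Set.iUnion₂_subset fun s hs => ht s hs)))

theorem mem_liminf_trimmed_empirical_general {d : ℕ} {Ω : Type*} [MeasurableSpace Ω]
    (μ : Measure Ω)
    (P : ProbabilityMeasure (Fin d → ℝ))
    (X : ℕ → Ω → (Fin d → ℝ))
    (hmeas : ∀ i, Measurable (X i))
    (hindep : iIndepFun X μ)
    (hdist : ∀ i, μ.map (X i) = (P : Measure (Fin d → ℝ)))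
    (Pn : Ω → ℕ → ProbabilityMeasure (Fin d → ℝ))
    (hPn : ∀ ω : Ω, ∀ n : ℕ, 1 ≤ n → ∀ B : Set (Fin d → ℝ), MeasurableSet B →
      ((Pn ω n : Measure (Fin d → ℝ)) B).toReal
        = (∑ i ∈ Finset.range n, Set.indicator B (fun _ => (1 : ℝ)) (X i ω)) / n)
    (α : ℝ) (hα : α ∈ Set.Ioc (0 : ℝ) 1)
    (Q : ProbabilityMeasure (Fin d → ℝ)) (hQ : Q ∈ trimSet P α) :
    ∀ᵐ ω ∂μ, ∃ (N : ℕ) (Qn : ℕ → ProbabilityMeasure (Fin d → ℝ)),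
      (∀ n, N ≤ n → Qn n ∈ trimSet (Pn ω n) α) ∧
      Tendsto Qn atTop (nhds Q) := by
  obtain ⟨hα0, hα1⟩ := hα
  have ha : 1 ≤ α⁻¹ := (one_le_inv₀ hα0).2 hα1
  obtain ⟨f, hf, hf0, hfa, hfQ⟩ := exists_bounded_density_of_le_mul (inv_nonneg.2 hα0.le) hQ
  have h_slln : ∀ B, MeasurableSet B → ∀ᵐ ω ∂μ, Tendsto
      (fun n => ∫ y in B, f y ∂empiricalMeasure (X · ω) n) atTop (𝓝 ((Q : Measure _) B).toReal) :=
    fun B hB => by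
      simpa only [integral_indicator hB, hfQ B hB] using ae_tendsto_integral_empiricalMeasure
        hmeas hindep hdist (hf.indicator hB) ((integrable_of_nonneg_of_le hf hf0 hfa).indicator hB)
  let U : Finset (countableBasis (Fin d → ℝ)) → Set (Fin d → ℝ) := fun t => ⋃ s ∈ t, (s : Set _)
  have hU : ∀ t, MeasurableSet (U t) := fun t =>
    (isOpen_biUnion fun s _ => (isBasis_countableBasis _).isOpen s.2).measurableSet
  have : Countable (countableBasis (Fin d → ℝ)) := (countable_countableBasis _).to_subtype
  filter_upwards [h_slln _ MeasurableSet.univ, ae_all_iff.2 fun t => h_slln _ (hU t)]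
    with ω h_total h_on
  have h_emp : ∀ B, Tendsto (fun n => ∫ y in B, f y ∂empiricalMeasure (X · ω) n) atTop
      (𝓝 ((Q : Measure _) B).toReal) →
      Tendsto (fun n => ∫ y in B, f y ∂(Pn ω n : Measure _)) atTop (𝓝 ((Q : Measure _) B).toReal) :=
    fun B h => h.congr' <| (eventually_ge_atTop 1).mono fun n hn =>
      congrArg (fun ν => ∫ y in B, f y ∂ν) (eq_empiricalMeasure_of_toReal_apply (hPn ω n hn)).symm
  have h_total' : Tendsto (fun n => ∫ y, f y ∂(Pn ω n : Measure _)) atTop (𝓝 1) := by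
    simpa using h_emp _ h_total
  exact ⟨0, fun n => ⟨reweight (Pn ω n) f α⁻¹, isProbabilityMeasure_reweight hf hf0 hfa ha⟩,
    fun n _ B _ => reweight_le_smul hf0 hfa ha B,
    ProbabilityMeasure.tendsto_of_forall_biUnion_le_liminf (isBasis_countableBasis _)
      (countable_countableBasis _) fun t =>
        le_liminf_reweight hf hf0 hfa ha (hU t) (measure_ne_top _ _) h_total' (h_emp _ (h_on t))⟩

/-- Let `X₁, X₂, …` be i.i.d. random vectors in `ℝ^d` with common distribution `P`, let `Pₙ`
be the empirical measure of `X₁, …, Xₙ`, let `α ∈ (0,1]` and let `Q ∈ P^α`. Then almost surely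
there is a sequence of probability measures `{Qₙ}` with `Qₙ ∈ Pₙ^α` for all sufficiently
large `n`, converging weakly to `Q`; that is, `Q` belongs a.s. to the Painlevé–Kuratowski lower
limit of the sets `Pₙ^α`. Here `X i` denotes `X_{i+1}` and the empirical measures are described
by the hypothesis `hPn`. -/
theorem mem_liminf_trimmed_empirical {d : ℕ} {Ω : Type*} [MeasurableSpace Ω]
    (μ : Measure Ω) [IsProbabilityMeasure μ]
    (P : ProbabilityMeasure (Fin d → ℝ))
    (X : ℕ → Ω → (Fin d → ℝ))
    (hmeas : ∀ i, Measurable (X i))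
    (hindep : iIndepFun X μ)
    (hdist : ∀ i, μ.map (X i) = (P : Measure (Fin d → ℝ)))
    (Pn : Ω → ℕ → ProbabilityMeasure (Fin d → ℝ))
    (hPn : ∀ ω : Ω, ∀ n : ℕ, 1 ≤ n → ∀ B : Set (Fin d → ℝ), MeasurableSet B →
      ((Pn ω n : Measure (Fin d → ℝ)) B).toReal
        = (∑ i ∈ Finset.range n, Set.indicator B (fun _ => (1 : ℝ)) (X i ω)) / n)
    (α : ℝ) (hα : α ∈ Set.Ioc (0 : ℝ) 1)
    (Q : ProbabilityMeasure (Fin d → ℝ)) (hQ : Q ∈ trimSet P α) :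
    ∀ᵐ ω ∂μ, ∃ (N : ℕ) (Qn : ℕ → ProbabilityMeasure (Fin d → ℝ)),
      (∀ n, N ≤ n → Qn n ∈ trimSet (Pn ω n) α) ∧
      Tendsto Qn atTop (nhds Q) :=
  mem_liminf_trimmed_empirical_general μ P X hmeas hindep hdist Pn hPn α hα Q hQ
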